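/- Let A = E(w) ⊗ ℤ[x,y] / (x^{n+1}, (n+1)x^n y, w x^n) with gradings |x| = −2, |y| = 2n, |w| = −1. Then the degree-i component A_i is isomorphic as abelian group to ℤ if i ∈ {−2n, −2n+1, −2n+2, …} and i is not a nonnegative multiple of 2n, and to ℤ ⊕ ℤ/(n+1) if i = 2nm with m ≥ 0. -/

import Mathlib

open MvPolynomial

/-- The ring `A = E(w) ⊗ ℤ[x,y] / (x^{n+1}, (n+1)xⁿy, w·xⁿ)`, realized as the quotient of
`ℤ[w,x,y]` by the ideal `(w², x^{n+1}, (n+1)xⁿy, w·xⁿ)` (the relation `w² = 0` encodes the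
exterior algebra `E(w)` on one generator). -/
noncomputable def ringA (n : ℕ) : Type :=
  MvPolynomial (Fin 3) ℤ ⧸
    (Ideal.span {(X 0 : MvPolynomial (Fin 3) ℤ) ^ 2, X 1 ^ (n + 1),
      ((n : MvPolynomial (Fin 3) ℤ) + 1) * X 1 ^ n * X 2, X 0 * X 1 ^ n})

noncomputable instance (n : ℕ) : CommRing (ringA n) :=
  inferInstanceAs (CommRing (MvPolynomial (Fin 3) ℤ ⧸ _))

/-- The image of `w` in `A`. -/
noncomputable def wgen (n : ℕ) : ringA n := Ideal.Quotient.mk _ (X 0)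
/-- The image of `x` in `A`. -/
noncomputable def xgen (n : ℕ) : ringA n := Ideal.Quotient.mk _ (X 1)
/-- The image of `y` in `A`. -/
noncomputable def ygen (n : ℕ) : ringA n := Ideal.Quotient.mk _ (X 2)

/-!
The monomials `wᵃ xᵇ yᶜ` span `A` and are homogeneous of degree `2(nc - b) - a`, so `A_i` is
spanned by the monomials of degree `i`. Those divisible by `w²`, `x^{n+1}` or `w xⁿ` vanish; for the
others the degree determines `(a, b, c)`, except that `y^c` and `xⁿ y^{c+1}` both have degree
`2nc`. Since the defining ideal is generated by monomials, the coefficient of a monomial not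
divisible by any generator vanishes on the ideal, so such a monomial has infinite order; the
coefficient of `xⁿ y^{c+1}` is only determined modulo `n + 1`, which gives the `ℤ/(n+1)` summand.
-/

theorem nonempty_span_singleton_equiv_self {R M : Type*} [Ring R] [AddCommGroup M] [Module R M]
    {x : M} (hx : ∀ r : R, r • x = 0 → r = 0) : Nonempty ((R ∙ x) ≃ₗ[R] R) :=
  ⟨(Ideal.quotTorsionOfEquivSpanSingleton R M x).symm.trans <| Submodule.quotEquivOfEqBot _ <|
    eq_bot_iff.2 fun r hr => hx r ((Ideal.mem_torsionOf_iff x r).1 hr)⟩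

theorem nonempty_span_pair_equiv_int_prod_zmod {M : Type*} [AddCommGroup M] {x t : M} {k : ℕ}
    (h : ∀ z₁ z₂ : ℤ, z₁ • x + z₂ • t = 0 ↔ z₁ = 0 ∧ (k : ℤ) ∣ z₂) :
    Nonempty (Submodule.span ℤ {x, t} ≃ₗ[ℤ] ℤ × ZMod k) := by
  have htk : (k : ℤ) • t = 0 := by simpa using (h 0 k).2 ⟨rfl, dvd_rfl⟩
  let φ : ℤ × ZMod k →+ M := (zmultiplesHom M x).coprod (ZMod.lift k ⟨zmultiplesHom M t, htk⟩)
  have hφ : ∀ z₁ z₂ : ℤ, φ (z₁, z₂) = z₁ • x + z₂ • t := fun z₁ z₂ => by simp [φ]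
  have hinj : Function.Injective φ.toIntLinearMap := by
    rw [← LinearMap.ker_eq_bot, eq_bot_iff]
    rintro ⟨z₁, w⟩ hker
    obtain ⟨z₂, rfl⟩ := ZMod.intCast_surjective w
    rw [LinearMap.mem_ker, AddMonoidHom.coe_toIntLinearMap, hφ] at hker
    obtain ⟨rfl, hdvd⟩ := (h z₁ z₂).1 hker
    simpa [ZMod.intCast_zmod_eq_zero_iff_dvd] using hdvd
  have hrange : LinearMap.range φ.toIntLinearMap = Submodule.span ℤ {x, t} := by
    ext y
    rw [LinearMap.mem_range, Submodule.mem_span_pair]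
    constructor
    · rintro ⟨⟨z₁, w⟩, rfl⟩
      obtain ⟨z₂, rfl⟩ := ZMod.intCast_surjective w
      exact ⟨z₁, z₂, (hφ z₁ z₂).symm⟩
    · rintro ⟨z₁, z₂, rfl⟩
      exact ⟨(z₁, z₂), hφ z₁ z₂⟩
  exact ⟨((LinearEquiv.ofInjective _ hinj).trans (LinearEquiv.ofEq _ _ hrange)).symm⟩

theorem DirectSum.Decomposition.eq_span_image_of_span_range_eq_top {ι R M κ : Type*}
    [DecidableEq ι] [Semiring R] [AddCommMonoid M] [Module R M] (𝒜 : ι → Submodule R M)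
    [DirectSum.Decomposition 𝒜] {v : κ → M} {deg : κ → ι} (hv : ∀ k, v k ∈ 𝒜 (deg k))
    (hspan : Submodule.span R (Set.range v) = ⊤) (i : ι) :
    𝒜 i = Submodule.span R (v '' {k | deg k = i}) := by
  refine le_antisymm (fun a ha => ?_) (Submodule.span_le.2 ?_)
  · have key : ∀ y ∈ Submodule.span R (Set.range v),
        (decompose 𝒜 y i : M) ∈ Submodule.span R (v '' {k | deg k = i}) := by
      intro y hy
      induction hy using Submodule.span_induction with
      | mem y hy =>
        obtain ⟨k, rfl⟩ := hy
        by_cases hk : deg k = i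
        · rw [decompose_of_mem_same 𝒜 (hk ▸ hv k)]
          exact Submodule.subset_span ⟨k, hk, rfl⟩
        · rw [decompose_of_mem_ne 𝒜 (hv k) hk]
          exact zero_mem _
      | zero => simp
      | add y z _ _ hy hz => simpa using add_mem hy hz
      | smul r y _ hy =>
        rw [decompose_smul, DirectSum.smul_apply, Submodule.coe_smul]
        exact Submodule.smul_mem _ r hy
    simpa [decompose_of_mem_same 𝒜 ha] using key a (hspan ▸ Submodule.mem_top)
  · rintro _ ⟨k, rfl, rfl⟩
    exact hv k

theorem MvPolynomial.coeff_mem_of_mem_span_monomial {σ R : Type*} [CommSemiring R] {J : Ideal R}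
    {e : σ →₀ ℕ} {S : Set (MvPolynomial σ R)}
    (hS : ∀ g ∈ S, ∃ s c, g = monomial s c ∧ (s ≤ e → c ∈ J)) {p : MvPolynomial σ R}
    (hp : p ∈ Ideal.span S) : coeff e p ∈ J := by
  suffices ∀ r, coeff e (r * p) ∈ J by simpa using this 1
  induction hp using Submodule.span_induction with
  | mem g hg =>
    obtain ⟨s, c, rfl, hsc⟩ := hS g hg
    intro r
    rw [coeff_mul_monomial']
    split_ifs with hs
    · exact J.mul_mem_left _ (hsc hs)
    · exact J.zero_mem
  | zero => simp
  | add p q _ _ hp hq =>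
    intro r
    rw [mul_add, coeff_add]
    exact J.add_mem (hp r) (hq r)
  | smul a p _ hp =>
    intro r
    rw [smul_eq_mul, ← mul_assoc]
    exact hp (r * a)

namespace RingA

variable {n : ℕ}

noncomputable def relIdeal (n : ℕ) : Ideal (MvPolynomial (Fin 3) ℤ) :=
  Ideal.span {(X 0 : MvPolynomial (Fin 3) ℤ) ^ 2, X 1 ^ (n + 1),
    ((n : MvPolynomial (Fin 3) ℤ) + 1) * X 1 ^ n * X 2, X 0 * X 1 ^ n}

noncomputable def mk (n : ℕ) : MvPolynomial (Fin 3) ℤ →+* ringA n :=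
  Ideal.Quotient.mk (relIdeal n)

theorem mk_eq_zero_iff {p : MvPolynomial (Fin 3) ℤ} : mk n p = 0 ↔ p ∈ relIdeal n :=
  Ideal.Quotient.eq_zero_iff_mem

theorem mk_surjective : Function.Surjective (mk n) :=
  Ideal.Quotient.mk_surjective

@[simp] theorem mk_X_zero : mk n (X 0) = wgen n := rfl
@[simp] theorem mk_X_one : mk n (X 1) = xgen n := rfl
@[simp] theorem mk_X_two : mk n (X 2) = ygen n := rfl

theorem wgen_sq : wgen n ^ 2 = 0 := by
  rw [← mk_X_zero, ← map_pow, mk_eq_zero_iff]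
  exact Ideal.subset_span (by simp)

theorem xgen_pow_succ : xgen n ^ (n + 1) = 0 := by
  rw [← mk_X_one, ← map_pow, mk_eq_zero_iff]
  exact Ideal.subset_span (by simp)

theorem wgen_mul_xgen_pow : wgen n * xgen n ^ n = 0 := by
  rw [← mk_X_zero, ← mk_X_one, ← map_pow, ← map_mul, mk_eq_zero_iff]
  exact Ideal.subset_span (by simp)

theorem natCast_succ_smul_xgen_pow_mul_ygen : ((n : ℤ) + 1) • (xgen n ^ n * ygen n) = 0 := by
  have : mk n (((n : MvPolynomial (Fin 3) ℤ) + 1) * X 1 ^ n * X 2) = 0 :=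
    mk_eq_zero_iff.2 (Ideal.subset_span (by simp))
  rw [map_mul, map_mul, map_pow, map_add, map_one, map_natCast, mk_X_one, mk_X_two] at this
  rw [zsmul_eq_mul, ← mul_assoc]
  exact_mod_cast this

noncomputable def mono (n : ℕ) (k : ℕ × ℕ × ℕ) : ringA n :=
  wgen n ^ k.1 * xgen n ^ k.2.1 * ygen n ^ k.2.2

def deg (n : ℕ) (k : ℕ × ℕ × ℕ) : ℤ := 2 * (n * k.2.2) - 2 * k.2.1 - k.1

/-- `wᵃ xᵇ yᶜ` is divisible by none of `w²`, `x^{n+1}`, `w xⁿ`; `IsFree` also excludes `xⁿ y`. -/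
def IsNormal (n : ℕ) (k : ℕ × ℕ × ℕ) : Prop := k.1 ≤ 1 ∧ k.2.1 ≤ n ∧ ¬(1 ≤ k.1 ∧ n ≤ k.2.1)

def IsFree (n : ℕ) (k : ℕ × ℕ × ℕ) : Prop := IsNormal n k ∧ ¬(n ≤ k.2.1 ∧ 1 ≤ k.2.2)

theorem mono_eq_zero_of_not_isNormal {k : ℕ × ℕ × ℕ} (hk : ¬IsNormal n k) : mono n k = 0 := by
  obtain ⟨a, b, c⟩ := k
  by_cases ha : 2 ≤ a
  · simp [mono, pow_eq_zero_of_le ha wgen_sq]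
  by_cases hb : n + 1 ≤ b
  · simp [mono, pow_eq_zero_of_le hb xgen_pow_succ]
  obtain ⟨rfl, b, rfl⟩ : a = 1 ∧ ∃ b', b = n + b' := by
    simp only [IsNormal] at hk
    exact ⟨by omega, b - n, by omega⟩
  calc mono n (1, n + b, c)
      = wgen n * xgen n ^ n * (xgen n ^ b * ygen n ^ c) := by simp only [mono]; ring
    _ = 0 := by rw [wgen_mul_xgen_pow, zero_mul]

theorem natCast_succ_smul_mono (c : ℕ) : ((n : ℤ) + 1) • mono n (0, n, c + 1) = 0 := by
  have : mono n (0, n, c + 1) = xgen n ^ n * ygen n * ygen n ^ c := by simp only [mono]; ring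
  rw [this, ← smul_mul_assoc, natCast_succ_smul_xgen_pow_mul_ygen, zero_mul]

theorem mono_mem {𝒜 : ℤ → Submodule ℤ (ringA n)} [GradedRing 𝒜]
    (hw : wgen n ∈ 𝒜 (-1)) (hx : xgen n ∈ 𝒜 (-2)) (hy : ygen n ∈ 𝒜 (2 * n))
    (k : ℕ × ℕ × ℕ) : mono n k ∈ 𝒜 (deg n k) := by
  rw [mono]
  convert SetLike.mul_mem_graded (SetLike.mul_mem_graded (SetLike.pow_mem_graded k.1 hw)
    (SetLike.pow_mem_graded k.2.1 hx)) (SetLike.pow_mem_graded k.2.2 hy) using 2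
  simp only [deg]
  ring

noncomputable def expo (k : ℕ × ℕ × ℕ) : Fin 3 →₀ ℕ :=
  Finsupp.equivFunOnFinite.symm ![k.1, k.2.1, k.2.2]

theorem expo_le_expo_iff {k k' : ℕ × ℕ × ℕ} : expo k ≤ expo k' ↔ k ≤ k' := by
  simp [expo, Finsupp.le_def, Fin.forall_fin_succ, Prod.le_def]

theorem expo_injective : Function.Injective expo := fun _ _ h =>
  le_antisymm (expo_le_expo_iff.1 h.le) (expo_le_expo_iff.1 h.ge)

theorem expo_apply_eq (d : Fin 3 →₀ ℕ) : expo (d 0, d 1, d 2) = d := by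
  ext i
  fin_cases i <;> rfl

theorem monomial_expo (k : ℕ × ℕ × ℕ) (r : ℤ) :
    monomial (expo k) r = C r * X 0 ^ k.1 * X 1 ^ k.2.1 * X 2 ^ k.2.2 := by
  rw [monomial_eq, Finsupp.prod_fintype _ _ (fun _ => pow_zero _), Fin.prod_univ_three]
  simp [expo, mul_assoc]

theorem mk_monomial_expo (k : ℕ × ℕ × ℕ) (r : ℤ) : mk n (monomial (expo k) r) = r • mono n k := by
  simp [monomial_expo, mono, zsmul_eq_mul, mul_assoc]

theorem relIdeal_eq_span_monomial : relIdeal n = Ideal.span {monomial (expo (2, 0, 0)) 1,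
    monomial (expo (0, n + 1, 0)) 1, monomial (expo (0, n, 1)) ((n : ℤ) + 1),
    monomial (expo (1, n, 0)) 1} := by
  simp [relIdeal, monomial_expo]

theorem coeff_expo_mem_of_mem_relIdeal {J : Ideal ℤ} {k : ℕ × ℕ × ℕ} (hk : IsNormal n k)
    (htors : (0, n, 1) ≤ k → (n : ℤ) + 1 ∈ J) {p : MvPolynomial (Fin 3) ℤ}
    (hp : p ∈ relIdeal n) : coeff (expo k) p ∈ J := by
  rw [relIdeal_eq_span_monomial] at hp
  refine coeff_mem_of_mem_span_monomial ?_ hp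
  obtain ⟨a, b, c⟩ := k
  simp only [IsNormal] at hk
  rintro g (rfl | rfl | rfl | rfl) <;> refine ⟨_, _, rfl, fun hle => ?_⟩ <;>
    rw [expo_le_expo_iff] at hle
  all_goals first
    | exact htors hle
    | (simp only [Prod.mk_le_mk] at hle; omega)

theorem IsFree.eq_zero_of_smul_mono_eq_zero {k : ℕ × ℕ × ℕ} (hk : IsFree n k) {z : ℤ}
    (h : z • mono n k = 0) : z = 0 := by
  rw [← mk_monomial_expo, mk_eq_zero_iff] at h
  simpa using coeff_expo_mem_of_mem_relIdeal (J := ⊥) hk.1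
    (fun hle => absurd ⟨hle.2.1, hle.2.2⟩ hk.2) h

theorem smul_mono_add_smul_mono_eq_zero_iff (hn : 0 < n) (m : ℕ) (z₁ z₂ : ℤ) :
    z₁ • mono n (0, 0, m) + z₂ • mono n (0, n, m + 1) = 0 ↔
      z₁ = 0 ∧ ((n + 1 : ℕ) : ℤ) ∣ z₂ := by
  constructor
  · intro h
    rw [← mk_monomial_expo, ← mk_monomial_expo, ← map_add, mk_eq_zero_iff] at h
    have hne : expo (0, 0, m) ≠ expo (0, n, m + 1) := expo_injective.ne (by simp)
    have h₁ := coeff_expo_mem_of_mem_relIdeal (J := ⊥) (k := (0, 0, m)) (by simp [IsNormal])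
      (fun hle => by simp at hle; omega) h
    have h₂ := coeff_expo_mem_of_mem_relIdeal (J := Ideal.span {(n : ℤ) + 1}) (k := (0, n, m + 1))
      (by simp [IsNormal]) (fun _ => Ideal.mem_span_singleton_self _) h
    simp [coeff_monomial, hne, hne.symm, Ideal.mem_span_singleton] at h₁ h₂
    exact ⟨h₁, by exact_mod_cast h₂⟩
  · rintro ⟨rfl, q, rfl⟩
    rw [zero_smul, zero_add, mul_comm, mul_smul, Nat.cast_succ, natCast_succ_smul_mono, smul_zero]

theorem span_range_mono : Submodule.span ℤ (Set.range (mono n)) = ⊤ := by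
  rw [eq_top_iff]
  rintro a -
  obtain ⟨p, rfl⟩ := mk_surjective a
  induction p using MvPolynomial.induction_on' with
  | monomial d r =>
    rw [← expo_apply_eq d, mk_monomial_expo]
    exact Submodule.smul_mem _ r (Submodule.subset_span ⟨_, rfl⟩)
  | add p q hp hq =>
    rw [map_add]
    exact add_mem hp hq

theorem grade_eq_span_mono_isNormal {𝒜 : ℤ → Submodule ℤ (ringA n)} [GradedRing 𝒜]
    (hw : wgen n ∈ 𝒜 (-1)) (hx : xgen n ∈ 𝒜 (-2)) (hy : ygen n ∈ 𝒜 (2 * n)) (i : ℤ) :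
    𝒜 i = Submodule.span ℤ (mono n '' {k | IsNormal n k ∧ deg n k = i}) := by
  rw [DirectSum.Decomposition.eq_span_image_of_span_range_eq_top 𝒜 (mono_mem hw hx hy)
    span_range_mono]
  refine le_antisymm (Submodule.span_le.2 ?_) (Submodule.span_mono (Set.image_mono fun _ hk => hk.2))
  rintro _ ⟨k, hk, rfl⟩
  by_cases hnk : IsNormal n k
  · exact Submodule.subset_span ⟨k, ⟨hnk, hk⟩, rfl⟩
  · rw [mono_eq_zero_of_not_isNormal hnk]
    exact zero_mem _

theorem IsNormal.eq_or_of_deg_eq (hn : 0 < n) {k k' : ℕ × ℕ × ℕ} (hk : IsNormal n k)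
    (hk' : IsNormal n k') (h : deg n k = deg n k') :
    k = k' ∨ (∃ c, k = (0, 0, c) ∧ k' = (0, n, c + 1)) ∨
      (∃ c, k = (0, n, c + 1) ∧ k' = (0, 0, c)) := by
  obtain ⟨a, b, c⟩ := k
  obtain ⟨a', b', c'⟩ := k'
  simp only [IsNormal, deg] at hk hk' h
  obtain rfl : a = a' := by omega
  have key : (n : ℤ) * (c - c') = b - b' := by linarith
  have hle : (c : ℤ) - c' ≤ 1 := by nlinarith
  have hge : -1 ≤ (c : ℤ) - c' := by nlinarith
  obtain hc | hc | hc : (c : ℤ) - c' = -1 ∨ (c : ℤ) - c' = 0 ∨ (c : ℤ) - c' = 1 := by omega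
  all_goals rw [hc] at key
  · obtain ⟨rfl, rfl, rfl, rfl⟩ : a = 0 ∧ b = 0 ∧ b' = n ∧ c' = c + 1 := by omega
    exact Or.inr (Or.inl ⟨c, rfl, rfl⟩)
  · obtain ⟨rfl, rfl⟩ : b = b' ∧ c = c' := by omega
    exact Or.inl rfl
  · obtain ⟨rfl, rfl, rfl, rfl⟩ : a = 0 ∧ b = n ∧ b' = 0 ∧ c = c' + 1 := by omega
    exact Or.inr (Or.inr ⟨c', rfl, rfl⟩)

theorem exists_isFree_deg_eq (hn : 0 < n) {i : ℤ} (hi : -(2 * n) ≤ i)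
    (hnm : ¬∃ m : ℕ, i = 2 * n * m) : ∃ k, IsFree n k ∧ deg n k = i := by
  rcases hi.eq_or_lt with rfl | hi
  · exact ⟨(0, n, 0), by simp [IsFree, IsNormal], by simp [deg]⟩
  obtain ⟨a, j, ha, rfl⟩ : ∃ a : ℕ, ∃ j : ℤ, a ≤ 1 ∧ i = 2 * j - a :=
    ⟨(i % 2).toNat, (i + 1) / 2, by omega, by omega⟩
  -- write `j = n * c - b` with `0 ≤ b < n` by dividing `j + n - 1` by `n`
  set q := j + n - 1
  have hq : 0 ≤ q := by omega
  have hdiv := Int.mul_ediv_add_emod q n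
  have hmod := Int.emod_nonneg q (by omega : (n : ℤ) ≠ 0)
  have hmod' := Int.emod_lt_of_pos q (by omega : (0 : ℤ) < n)
  have hc := Int.ediv_nonneg hq (by omega : (0 : ℤ) ≤ n)
  refine ⟨(a, (n - 1 - q % n).toNat, (q / n).toNat), ?_, ?_⟩
  · simp only [IsFree, IsNormal]
    omega
  · simp only [deg, Int.toNat_of_nonneg hc]
    omega

theorem setOf_isNormal_deg_eq_two_mul_mul (hn : 0 < n) (m : ℕ) :
    {k | IsNormal n k ∧ deg n k = 2 * n * m} = {(0, 0, m), (0, n, m + 1)} := by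
  ext k
  constructor
  · rintro ⟨hk, hdeg⟩
    have hnormal : IsNormal n (0, 0, m) := by simp [IsNormal]
    rcases hk.eq_or_of_deg_eq hn hnormal (by rw [hdeg, deg]; push_cast; ring) with
      rfl | ⟨c, rfl, h⟩ | ⟨c, rfl, h⟩
    · exact Or.inl rfl
    · simp only [Prod.mk.injEq] at h
      omega
    · simp only [Prod.mk.injEq, true_and] at h
      exact Or.inr (by rw [h]; rfl)
  · rintro (rfl | rfl)
    · exact ⟨by simp [IsNormal], by simp [deg]; ring⟩
    · exact ⟨by simp [IsNormal], by simp [deg]; ring⟩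

theorem setOf_isNormal_deg_eq_deg (hn : 0 < n) {k : ℕ × ℕ × ℕ} (hk : IsFree n k)
    (hnm : ¬∃ m : ℕ, deg n k = 2 * n * m) : {k' | IsNormal n k' ∧ deg n k' = deg n k} = {k} := by
  ext k'
  constructor
  · rintro ⟨hk', hdeg⟩
    rcases hk'.eq_or_of_deg_eq hn hk.1 hdeg with rfl | ⟨c, rfl, rfl⟩ | ⟨c, rfl, rfl⟩
    · rfl
    · simp [IsFree] at hk
    · exact absurd ⟨c, by simp [deg]; ring⟩ hnm
  · rintro rfl
    exact ⟨hk.1, rfl⟩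

end RingA

/-- Let `A = E(w) ⊗ ℤ[x,y]/(x^{n+1}, (n+1)xⁿy, w·xⁿ)` be graded with `|x| = −2`, `|y| = 2n`,
`|w| = −1`.  Then the degree-`i` homogeneous component `A_i` is isomorphic as an abelian
group to `ℤ` when `i ≥ −2n` and `i` is not a nonnegative multiple of `2n`, and to
`ℤ ⊕ ℤ/(n+1)` when `i = 2nm` for some `m ≥ 0`. -/
theorem ringA_graded_pieces (n : ℕ) (hn : 1 ≤ n)
    (𝒜 : ℤ → Submodule ℤ (ringA n)) [GradedRing 𝒜]
    (hw : wgen n ∈ 𝒜 (-1)) (hx : xgen n ∈ 𝒜 (-2)) (hy : ygen n ∈ 𝒜 (2 * n)) :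
    ∀ i : ℤ,
      ((-(2 * (n : ℤ)) ≤ i ∧ ¬ ∃ m : ℕ, i = 2 * n * m) →
        Nonempty ((𝒜 i) ≃ₗ[ℤ] ℤ)) ∧
      (∀ m : ℕ, i = 2 * n * m →
        Nonempty ((𝒜 i) ≃ₗ[ℤ] (ℤ × ZMod (n + 1)))) := by
  intro i
  refine ⟨fun ⟨hge, hnm⟩ => ?_, fun m hm => ?_⟩
  · obtain ⟨k, hk, rfl⟩ := RingA.exists_isFree_deg_eq hn hge hnm
    rw [RingA.grade_eq_span_mono_isNormal hw hx hy, RingA.setOf_isNormal_deg_eq_deg hn hk hnm,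
      Set.image_singleton]
    exact nonempty_span_singleton_equiv_self fun _ => hk.eq_zero_of_smul_mono_eq_zero
  · rw [hm, RingA.grade_eq_span_mono_isNormal hw hx hy,
      RingA.setOf_isNormal_deg_eq_two_mul_mul hn, Set.image_pair]
    exact nonempty_span_pair_equiv_int_prod_zmod (RingA.smul_mono_add_smul_mono_eq_zero_iff hn m)
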